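/- The unnormalized semantics of the expression 'let x = nflip() in let y = flip(2/3) in let t = observe(x ∨ y) in y' is exactly the set { (2/3)|T⟩ + ((1/3)·p)|F⟩ | p ∈ [0, 1] }. -/

import Mathlib

namespace NoDice

/-! ### Types, values, variables, formulas -/

/-- Types of the noDice language: `τ ::= Bool | τ × τ`. -/
inductive Ty : Type
  | bool : Ty
  | prod : Ty → Ty → Ty
deriving DecidableEq

/-- Values of the noDice language: `v ::= T | F | (v, v)`. -/
inductive Val : Type
  | T : Val
  | F : Val
  | pair : Val → Val → Val
deriving DecidableEq

/-- The type of a value. -/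
def tyOf : Val → Ty
  | .T => .bool
  | .F => .bool
  | .pair a b => .prod (tyOf a) (tyOf b)

/-- Program variables, with names `x_l`, `x_r` for left/right components. -/
inductive PVar : Type
  | base : ℕ → PVar
  | left : PVar → PVar
  | right : PVar → PVar
deriving DecidableEq

/-- Boolean formulas over program variables and (numbered) flip variables. -/
inductive Formula : Type
  | tt : Formula
  | ff : Formula
  | pvar (x : PVar) : Formula
  | fvar (n : ℕ) : Formula
  | and (a b : Formula) : Formula
  | or (a b : Formula) : Formula
  | not (a : Formula) : Formula
deriving DecidableEq

/-- Evaluation of a formula under assignments to program variables and flip variables. -/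
def Formula.eval (σ : PVar → Bool) (ν : ℕ → Bool) : Formula → Bool
  | .tt => true
  | .ff => false
  | .pvar x => σ x
  | .fvar n => ν n
  | .and a b => Formula.eval σ ν a && Formula.eval σ ν b
  | .or a b => Formula.eval σ ν a || Formula.eval σ ν b
  | .not a => !(Formula.eval σ ν a)

/-- (Possibly nested) tuples of Boolean formulas, shaped by a type. -/
inductive FTuple : Ty → Type
  | base (φ : Formula) : FTuple .bool
  | pair {τ₁ τ₂ : Ty} (a : FTuple τ₁) (b : FTuple τ₂) : FTuple (.prod τ₁ τ₂)

/-- Evaluation of a tuple of formulas to a value. -/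
def FTuple.eval (σ : PVar → Bool) (ν : ℕ → Bool) : {τ : Ty} → FTuple τ → Val
  | _, .base φ => if Formula.eval σ ν φ then .T else .F
  | _, .pair a b => .pair (FTuple.eval σ ν a) (FTuple.eval σ ν b)

/-- The form function `F_τ(x)`: a template for the variable `x` of type `τ`. -/
def formOf : (τ : Ty) → PVar → FTuple τ
  | .bool, x => .base (.pvar x)
  | .prod τ₁ τ₂, x => .pair (formOf τ₁ (.left x)) (formOf τ₂ (.right x))

/-- A value as a tuple of constant formulas at a given type (junk on type mismatch). -/
def constFTAt : Val → (τ : Ty) → FTuple τ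
  | .T, .bool => .base .tt
  | .F, .bool => .base .ff
  | .pair _ _, .bool => .base .ff
  | .T, .prod τ₁ τ₂ => .pair (constFTAt .T τ₁) (constFTAt .T τ₂)
  | .F, .prod τ₁ τ₂ => .pair (constFTAt .F τ₁) (constFTAt .F τ₂)
  | .pair a b, .prod τ₁ τ₂ => .pair (constFTAt a τ₁) (constFTAt b τ₂)

/-- Ordinary substitution of a formula for a program variable. -/
def Formula.substP (x : PVar) (ψ : Formula) : Formula → Formula
  | .tt => .tt
  | .ff => .ff
  | .pvar y => if y = x then ψ else .pvar y
  | .fvar n => .fvar n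
  | .and a b => .and (Formula.substP x ψ a) (Formula.substP x ψ b)
  | .or a b => .or (Formula.substP x ψ a) (Formula.substP x ψ b)
  | .not a => .not (Formula.substP x ψ a)

/-- Typed substitution `φ[x ↦^τ φ̇']` of a tuple of formulas into a single formula:
`φ[x ↦^Bool ψ]` is ordinary substitution, and
`φ[x ↦^{τ₁×τ₂} (l, r)] = φ[x_l ↦^{τ₁} l][x_r ↦^{τ₂} r]`. -/
def Formula.substT (x : PVar) : {τ : Ty} → FTuple τ → Formula → Formula
  | _, .base ψ, φ => Formula.substP x ψ φ
  | _, .pair l r, φ => Formula.substT (PVar.right x) r (Formula.substT (PVar.left x) l φ)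

/-- Typed substitution into a tuple of formulas, componentwise. -/
def FTuple.substT (x : PVar) {τ' : Ty} (rep : FTuple τ') : {τ : Ty} → FTuple τ → FTuple τ
  | _, .base φ => .base (Formula.substT x rep φ)
  | _, .pair a b => .pair (FTuple.substT x rep a) (FTuple.substT x rep b)

/-- Renaming of flip variables in a formula. -/
def Formula.renameF (ρf : ℕ → ℕ) : Formula → Formula
  | .tt => .tt
  | .ff => .ff
  | .pvar x => .pvar x
  | .fvar n => .fvar (ρf n)
  | .and a b => .and (Formula.renameF ρf a) (Formula.renameF ρf b)
  | .or a b => .or (Formula.renameF ρf a) (Formula.renameF ρf b)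
  | .not a => .not (Formula.renameF ρf a)

/-- Renaming of flip variables in a tuple of formulas. -/
def FTuple.renameF (ρf : ℕ → ℕ) : {τ : Ty} → FTuple τ → FTuple τ
  | _, .base φ => .base (Formula.renameF ρf φ)
  | _, .pair a b => .pair (FTuple.renameF ρf a) (FTuple.renameF ρf b)

/-- Broadcast conjunction `φ ∧^τ φ̇`. -/
def FTuple.bandB (φ : Formula) : {τ : Ty} → FTuple τ → FTuple τ
  | _, .base ψ => .base (.and φ ψ)
  | _, .pair a b => .pair (FTuple.bandB φ a) (FTuple.bandB φ b)

/-- Pointwise disjunction `φ̇ ∨^τ φ̇'`. -/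
def FTuple.borP : {τ : Ty} → FTuple τ → FTuple τ → FTuple τ
  | .bool, .base a, .base b => .base (.or a b)
  | .prod _ _, .pair a b, .pair c d => .pair (FTuple.borP a c) (FTuple.borP b d)

/-! ### Syntax of noDice -/

/-- Probabilities: rationals in `[0,1]`. -/
abbrev Prob := {q : ℚ // 0 ≤ q ∧ q ≤ 1}

/-- Function identifiers. -/
abbrev FId := ℕ

/-- Atomic expressions (A-normal form): variables or values. -/
inductive AExp : Type
  | var (x : PVar)
  | val (v : Val)
deriving DecidableEq

/-- noDice expressions in A-normal form. -/
inductive Expr : Type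
  | atom (a : AExp)
  | pair (a b : AExp)
  | fst (a : AExp)
  | snd (a : AExp)
  | ite (g : AExp) (e₁ e₂ : Expr)
  | letin (x : PVar) (e₁ e₂ : Expr)
  | flip (θ : Prob)
  | nflip
  | observe (a : AExp)
  | eqTest (a b : AExp)
  | call (f : FId) (a : AExp)

/-- Substitution of a value for a variable in an atomic expression. -/
def AExp.subst (x : PVar) (v : Val) : AExp → AExp
  | .var y => if y = x then .val v else .var y
  | .val w => .val w

/-- Substitution of a value for a variable in an expression (respecting shadowing). -/
def Expr.subst (x : PVar) (v : Val) : Expr → Expr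
  | .atom a => .atom (AExp.subst x v a)
  | .pair a b => .pair (AExp.subst x v a) (AExp.subst x v b)
  | .fst a => .fst (AExp.subst x v a)
  | .snd a => .snd (AExp.subst x v a)
  | .ite g e₁ e₂ => .ite (AExp.subst x v g) (Expr.subst x v e₁) (Expr.subst x v e₂)
  | .letin y e₁ e₂ => .letin y (Expr.subst x v e₁) (if y = x then e₂ else Expr.subst x v e₂)
  | .flip θ => .flip θ
  | .nflip => .nflip
  | .observe a => .observe (AExp.subst x v a)
  | .eqTest a b => .eqTest (AExp.subst x v a) (AExp.subst x v b)
  | .call f a => .call f (AExp.subst x v a)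

/-- Simultaneous substitution of values for (distinct) variables. -/
def Expr.msubst (e : Expr) (ρ : List (PVar × Val)) : Expr :=
  ρ.foldl (fun e' p => Expr.subst p.1 p.2 e') e

/-! ### Unnormalized and normalized semantics -/

/-- Sub-distributions over values (the sub-distribution constraints are semantic). -/
abbrev SubDist := Val → ℝ

/-- The Dirac distribution `1|v⟩`. -/
def dirac (v : Val) : SubDist := fun w => if w = v then 1 else 0

/-- Function tables, mapping function identifiers and inputs to sets of sub-distributions. -/
abbrev Table := FId → Val → Set SubDist

/-- The empty function table. -/
def emptyTable : Table := fun _ _ => ∅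

/-- Unnormalized denotational semantics of noDice expressions:
`Sem tab e d` means `d ∈ ⟦e⟧^tab`. -/
inductive Sem (tab : Table) : Expr → SubDist → Prop
  | val (v : Val) : Sem tab (.atom (.val v)) (dirac v)
  | tup (v₁ v₂ : Val) : Sem tab (.pair (.val v₁) (.val v₂)) (dirac (.pair v₁ v₂))
  | fst (v₁ v₂ : Val) : Sem tab (.fst (.val (.pair v₁ v₂))) (dirac v₁)
  | snd (v₁ v₂ : Val) : Sem tab (.snd (.val (.pair v₁ v₂))) (dirac v₂)
  | flip (θ : Prob) :
      Sem tab (.flip θ) (fun w => if w = .T then (θ.1 : ℝ) else if w = .F then 1 - (θ.1 : ℝ) else 0)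
  | nflip (p : ℝ) (h₀ : 0 ≤ p) (h₁ : p ≤ 1) :
      Sem tab .nflip (fun w => if w = .T then p else if w = .F then 1 - p else 0)
  | obsT : Sem tab (.observe (.val .T)) (dirac .T)
  | obsF : Sem tab (.observe (.val .F)) (fun _ => 0)
  | iteT {e₁ e₂ : Expr} {d : SubDist} : Sem tab e₁ d → Sem tab (.ite (.val .T) e₁ e₂) d
  | iteF {e₁ e₂ : Expr} {d : SubDist} : Sem tab e₂ d → Sem tab (.ite (.val .F) e₁ e₂) d
  | letin {x : PVar} {e₁ e₂ : Expr} {d₁ : SubDist} {dv : Val → SubDist} {d : SubDist} :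
      Sem tab e₁ d₁ →
      (∀ v, 0 < d₁ v → Sem tab (Expr.subst x v e₂) (dv v)) →
      (∀ w, d w = ∑' v, d₁ v * dv v w) →
      Sem tab (.letin x e₁ e₂) d
  | eqTest (v₁ v₂ : Val) :
      Sem tab (.eqTest (.val v₁) (.val v₂)) (dirac (if v₁ = v₂ then .T else .F))
  | call {f : FId} {v : Val} {d : SubDist} : d ∈ tab f v → Sem tab (.call f (.val v)) d

/-- The normalizing constant `d_D = Σ_v d(v)` of a sub-distribution. -/
noncomputable def mass (d : SubDist) : ℝ := ∑' v, d v

/-- The normalized semantics: all normalizations of distributions in `D`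
(`0/0 = 0` by real division). -/
def normSet (D : Set SubDist) : Set SubDist :=
  {d' | ∃ d ∈ D, ∀ v, d' v = d v / mass d}

/-! ### Semantics of programs -/

/-- Function definitions `fun func(x : τ₁) : τ₂ { e }`. -/
structure FunDef : Type where
  name : FId
  arg : PVar
  argTy : Ty
  retTy : Ty
  body : Expr

/-- The semantics of a function definition: input value to set of sub-distributions. -/
def funSem (tab : Table) (fd : FunDef) : Val → Set SubDist :=
  fun v => {d | Sem tab (Expr.subst fd.arg v fd.body) d}

/-- Unnormalized semantics of programs: process function definitions, then the main
expression; `SemProg tab fs e d` means `d ∈ ⟦fs • e⟧^tab`. -/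
def SemProg : Table → List FunDef → Expr → SubDist → Prop
  | tab, [], e, d => Sem tab e d
  | tab, fd :: fs, e, d =>
      SemProg (fun g => if g = fd.name then funSem tab fd else tab g) fs e d

/-! ### MDPs, schedulers and (conditional) reachability -/

/-- A Markov decision process with states `S`, actions `Act`, atomic propositions `AP`. -/
structure MDP (S : Type) (Act : Type) (AP : Type) : Type where
  init : S
  P : S → Act → S → ℝ
  L : S → Set AP

/-- An action is enabled in a state if some transition has positive probability. -/
def MDP.Enabled {S Act AP : Type} (M : MDP S Act AP) (s : S) (a : Act) : Prop :=
  ∃ s', 0 < M.P s a s'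

/-- A (memoryless) scheduler: a distribution over enabled actions for each state. -/
def IsScheduler {S Act AP : Type} (M : MDP S Act AP) (σ : S → Act → ℝ) : Prop :=
  (∀ s a, 0 ≤ σ s a) ∧ (∀ s, (∑' a, σ s a) = 1) ∧ ∀ s a, 0 < σ s a → M.Enabled s a

/-- One-step transition probability under a scheduler. -/
noncomputable def stepP {S Act AP : Type} (M : MDP S Act AP) (σ : S → Act → ℝ) (s s' : S) : ℝ :=
  ∑' a, σ s a * M.P s a s'

/-- The probability of a finite path under a scheduler. -/
noncomputable def pathProb {S Act AP : Type} (M : MDP S Act AP) (σ : S → Act → ℝ) :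
    List S → ℝ
  | [] => 1
  | [_] => 1
  | s :: s' :: rest => stepP M σ s s' * pathProb M σ (s' :: rest)

/-- A path witnessing the reachability event `◇F`: it starts in the initial state,
ends in `F` and visits `F` for the first time at its end. -/
def IsReachPath {S Act AP : Type} (M : MDP S Act AP) (F : S → Prop) (π : List S) : Prop :=
  π.head? = some M.init ∧ (∃ l, π.getLast? = some l ∧ F l) ∧ ∀ s ∈ π.dropLast, ¬ F s

/-- The probability `Pr^σ_M(◇F)` of eventually reaching a state in `F`. -/
noncomputable def PrReach {S Act AP : Type} (M : MDP S Act AP) (σ : S → Act → ℝ)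
    (F : S → Prop) : ℝ :=
  ∑' π : {π : List S // IsReachPath M F π}, pathProb M σ π.1

/-- A list of states visits `F`. -/
def ReachesIn {S : Type} (F : S → Prop) (π : List S) : Prop := ∃ s ∈ π, F s

/-- A path witnessing the joint event `◇F ∧ ◇G`, minimal in that the event is not
yet witnessed before the last state. -/
def IsReachBothPath {S Act AP : Type} (M : MDP S Act AP) (F G : S → Prop) (π : List S) :
    Prop :=
  π.head? = some M.init ∧ ReachesIn F π ∧ ReachesIn G π ∧
    ¬ (ReachesIn F π.dropLast ∧ ReachesIn G π.dropLast)

/-- The probability `Pr^σ_M(◇F ∧ ◇G)`. -/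
noncomputable def PrReachBoth {S Act AP : Type} (M : MDP S Act AP) (σ : S → Act → ℝ)
    (F G : S → Prop) : ℝ :=
  ∑' π : {π : List S // IsReachBothPath M F G π}, pathProb M σ π.1

/-- Conditional reachability `Pr^σ_M(◇F | ◇G) = Pr^σ_M(◇F ∧ ◇G) / Pr^σ_M(◇G)`
(real division, so `0` when the denominator is `0`). -/
noncomputable def PrCond {S Act AP : Type} (M : MDP S Act AP) (σ : S → Act → ℝ)
    (F G : S → Prop) : ℝ :=
  PrReachBoth M σ F G / PrReach M σ G

/-- Maximal reachability probability `Pr^max_M(◇F)` over all (memoryless) schedulers. -/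
noncomputable def PrMax {S Act AP : Type} (M : MDP S Act AP) (F : S → Prop) : ℝ :=
  sSup {x | ∃ σ, IsScheduler M σ ∧ x = PrReach M σ F}

/-- Maximal conditional reachability probability `Pr^max_M(◇F | ◇G)`. -/
noncomputable def PrMaxCond {S Act AP : Type} (M : MDP S Act AP) (F G : S → Prop) : ℝ :=
  sSup {x | ∃ σ, IsScheduler M σ ∧ x = PrCond M σ F G}

/-! ### Algebraic decision diagrams and their lifted MDPs -/

/-- Outputs of an ADD: values or the reject value `R`. -/
inductive Out : Type
  | val (v : Val)
  | reject
deriving DecidableEq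

/-- Annotations of flip variables: probabilistic with probability `θ`, or nondeterministic. -/
inductive Flip : Type
  | prob (θ : ℚ)
  | ndet

/-- An annotated trace of flip variables. -/
abbrev Trace := List (ℕ × Flip)

/-- An ADD over `k` (trace-indexed) decision variables: a rooted graph whose inner
nodes test a variable (an index into the trace) and have then/else successors, and
whose terminal nodes carry outputs. -/
structure ADD (k : ℕ) : Type 1 where
  Node : Type
  root : Node
  kind : Node → Fin k ⊕ Out
  next : Node → Bool → Node

/-- An ADD is ordered: variable indices strictly increase along edges. -/
def ADD.Ordered {k : ℕ} (A : ADD k) : Prop :=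
  ∀ n i, A.kind n = Sum.inl i → ∀ b j, A.kind (A.next n b) = Sum.inl j → i < j

/-- Fuelled evaluation of an ADD under an assignment of its decision variables. -/
def ADD.evalAux {k : ℕ} (A : ADD k) (b : Fin k → Bool) : ℕ → A.Node → Option Out
  | 0, n =>
    match A.kind n with
    | Sum.inr o => some o
    | Sum.inl _ => none
  | m + 1, n =>
    match A.kind n with
    | Sum.inr o => some o
    | Sum.inl i => ADD.evalAux A b m (A.next n (b i))

/-- The assignment of flip variables determined by a trace and a Boolean vector. -/
def traceAssign (t : Trace) (b : Fin t.length → Bool) : ℕ → Bool := fun n =>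
  if h : (t.map Prod.fst).idxOf n < t.length then b ⟨(t.map Prod.fst).idxOf n, h⟩
  else false

/-- The function `(φ̇ | γ)_t` represented by a compiled triple: the output value of the
model formulas if the accepting formula holds, and the reject value `R` otherwise. -/
def guarded {τ : Ty} (φ : FTuple τ) (γ : Formula) (t : Trace) (b : Fin t.length → Bool) :
    Out :=
  if Formula.eval (fun _ => false) (traceAssign t b) γ then
    .val (FTuple.eval (fun _ => false) (traceAssign t b) φ)
  else .reject

/-- `A` is an ADD for the compiled triple `(φ̇, γ, t)`: it is ordered (respecting the
variable order of `t`) and represents the function `(φ̇ | γ)_t`. -/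
def IsADDFor {τ : Ty} (t : Trace) (φ : FTuple τ) (γ : Formula) (A : ADD t.length) : Prop :=
  A.Ordered ∧ ∀ b : Fin t.length → Bool, A.evalAux b t.length A.root = some (guarded φ γ t b)

/-- The flip annotations of a trace. -/
def annOf (t : Trace) : Fin t.length → Flip := fun i => (t.get i).2

/-- A reduced ADD: no redundant tests, no duplicate tests, no duplicate terminals. -/
def ADD.Reduced {k : ℕ} (A : ADD k) : Prop :=
  (∀ n i, A.kind n = Sum.inl i → A.next n true ≠ A.next n false) ∧
  (∀ n m i, A.kind n = Sum.inl i → A.kind m = Sum.inl i →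
    A.next n true = A.next m true → A.next n false = A.next m false → n = m) ∧
  (∀ n m o, A.kind n = Sum.inr o → A.kind m = Sum.inr o → n = m)

/-- Actions of lifted MDPs. -/
inductive MAct : Type
  | l | r | d
deriving DecidableEq

/-- Atomic propositions of lifted MDPs: output values, acceptance `A`, rejection `R`. -/
inductive Label : Type
  | val (v : Val)
  | acc
  | rej
deriving DecidableEq

open Classical in
/-- The unnormalized MDP lifted from an ADD with flip annotations `ann`. -/
noncomputable def liftU {k : ℕ} (A : ADD k) (ann : Fin k → Flip) :
    MDP A.Node MAct Label where
  init := A.root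
  P := fun s a s' =>
    match A.kind s with
    | Sum.inr _ => if a = MAct.d ∧ s' = s then 1 else 0
    | Sum.inl i =>
      match ann i with
      | Flip.prob θ =>
        if a = MAct.d then
          (if s' = A.next s true then (θ : ℝ) else 0) +
          (if s' = A.next s false then 1 - (θ : ℝ) else 0)
        else 0
      | Flip.ndet =>
        if a = MAct.l ∧ s' = A.next s true then 1
        else if a = MAct.r ∧ s' = A.next s false then 1 else 0
  L := fun s =>
    match A.kind s with
    | Sum.inr (Out.val v) => {Label.val v, Label.acc}
    | Sum.inr Out.reject => {Label.rej}
    | Sum.inl _ => (∅ : Set Label)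

open Classical in
/-- The normalized MDP lifted from an ADD: as the unnormalized one, but the
`R`-terminal state transitions back to the initial state. -/
noncomputable def liftN {k : ℕ} (A : ADD k) (ann : Fin k → Flip) :
    MDP A.Node MAct Label where
  init := A.root
  P := fun s a s' =>
    match A.kind s with
    | Sum.inr (Out.val _) => if a = MAct.d ∧ s' = s then 1 else 0
    | Sum.inr Out.reject => if a = MAct.d ∧ s' = A.root then 1 else 0
    | Sum.inl i =>
      match ann i with
      | Flip.prob θ =>
        if a = MAct.d then
          (if s' = A.next s true then (θ : ℝ) else 0) +
          (if s' = A.next s false then 1 - (θ : ℝ) else 0)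
        else 0
      | Flip.ndet =>
        if a = MAct.l ∧ s' = A.next s true then 1
        else if a = MAct.r ∧ s' = A.next s false then 1 else 0
  L := fun s =>
    match A.kind s with
    | Sum.inr (Out.val v) => {Label.val v, Label.acc}
    | Sum.inr Out.reject => {Label.rej}
    | Sum.inl _ => (∅ : Set Label)

open Classical in
/-- Removing a node `u` from an ADD, redirecting all its incoming edges (and the root,
if needed) to `target`. -/
noncomputable def ADD.remove {k : ℕ} (A : ADD k) (u target : A.Node) (h : target ≠ u) :
    ADD k where
  Node := {n : A.Node // n ≠ u}
  root := if hr : A.root = u then ⟨target, h⟩ else ⟨A.root, hr⟩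
  kind := fun n => A.kind n.1
  next := fun n b => if hn : A.next n.1 b = u then ⟨target, h⟩ else ⟨A.next n.1 b, hn⟩

/-- The (memoryless-scheduler) reachability distributions of `M` correspond exactly to
the set `D` of sub-distributions. -/
def Correspond {S : Type} (M : MDP S MAct Label) (D : Set SubDist) : Prop :=
  (∀ d ∈ D, ∃ σ, IsScheduler M σ ∧
      ∀ v : Val, d v = PrReach M σ (fun s => Label.val v ∈ M.L s)) ∧
  (∀ σ, IsScheduler M σ → ∃ d ∈ D,
      ∀ v : Val, d v = PrReach M σ (fun s => Label.val v ∈ M.L s))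

/-! ### Compilation -/

/-- Type environments. -/
abbrev TyEnv := PVar → Option Ty

/-- Compiled function information: formal argument, its type, return type, compiled
model formulas, accepting formula and trace of the body. -/
structure FunInfo : Type where
  arg : PVar
  argTy : Ty
  retTy : Ty
  model : FTuple retTy
  accept : Formula
  trace : Trace

/-- Compiled function tables. -/
abbrev PhiTable := FId → Option FunInfo

/-- The noDice compilation judgment `Γ, Φ ⊢ e : τ ⇝ (φ̇, γ, t)`. -/
inductive Compile : TyEnv → PhiTable → Expr → (τ : Ty) → FTuple τ → Formula → Trace → Prop
  | val {Γ Φ} (v : Val) :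
      Compile Γ Φ (.atom (.val v)) (tyOf v) (constFTAt v (tyOf v)) .tt []
  | ident {Γ Φ} (x : PVar) (τ : Ty) :
      Γ x = some τ →
      Compile Γ Φ (.atom (.var x)) τ (formOf τ x) .tt []
  | flip {Γ Φ} (θ : Prob) (n : ℕ) :
      Compile Γ Φ (.flip θ) .bool (.base (.fvar n)) .tt [(n, .prob θ.1)]
  | nflip {Γ Φ} (n : ℕ) :
      Compile Γ Φ .nflip .bool (.base (.fvar n)) .tt [(n, .ndet)]
  | tup {Γ Φ} (x₁ x₂ : PVar) (τ₁ τ₂ : Ty) :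
      Γ x₁ = some τ₁ → Γ x₂ = some τ₂ →
      Compile Γ Φ (.pair (.var x₁) (.var x₂)) (.prod τ₁ τ₂)
        (.pair (formOf τ₁ x₁) (formOf τ₂ x₂)) .tt []
  | obs {Γ Φ} (a : AExp) (φ : Formula) :
      Compile Γ Φ (.atom a) .bool (.base φ) .tt [] →
      Compile Γ Φ (.observe a) .bool (.base .tt) φ []
  | fst {Γ Φ} (x : PVar) (τ₁ τ₂ : Ty) :
      Γ x = some (.prod τ₁ τ₂) →
      Compile Γ Φ (.fst (.var x)) τ₁ (formOf τ₁ (.left x)) .tt []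
  | snd {Γ Φ} (x : PVar) (τ₁ τ₂ : Ty) :
      Γ x = some (.prod τ₁ τ₂) →
      Compile Γ Φ (.snd (.var x)) τ₂ (formOf τ₂ (.right x)) .tt []
  | ite {Γ Φ} (g : AExp) (e₁ e₂ : Expr) (τ : Ty) (φg : Formula)
      (φ₁ : FTuple τ) (γ₁ : Formula) (t₁ : Trace)
      (φ₂ : FTuple τ) (γ₂ : Formula) (t₂ : Trace) :
      Compile Γ Φ (.atom g) .bool (.base φg) .tt [] →
      Compile Γ Φ e₁ τ φ₁ γ₁ t₁ →
      Compile Γ Φ e₂ τ φ₂ γ₂ t₂ →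
      List.Disjoint (t₁.map Prod.fst) (t₂.map Prod.fst) →
      Compile Γ Φ (.ite g e₁ e₂) τ
        (FTuple.borP (FTuple.bandB φg φ₁) (FTuple.bandB (.not φg) φ₂))
        (.or (.and φg γ₁) (.and (.not φg) γ₂))
        (t₁ ++ t₂)
  | letin {Γ Φ} (x : PVar) (e₁ e₂ : Expr) (τ₁ τ₂ : Ty)
      (φ₁ : FTuple τ₁) (γ₁ : Formula) (t₁ : Trace)
      (φ₂ : FTuple τ₂) (γ₂ : Formula) (t₂ : Trace) :
      Compile Γ Φ e₁ τ₁ φ₁ γ₁ t₁ →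
      Compile (fun y => if y = x then some τ₁ else Γ y) Φ e₂ τ₂ φ₂ γ₂ t₂ →
      List.Disjoint (t₁.map Prod.fst) (t₂.map Prod.fst) →
      Compile Γ Φ (.letin x e₁ e₂) τ₂
        (FTuple.substT x φ₁ φ₂)
        (.and γ₁ (Formula.substT x φ₁ γ₂))
        (t₁ ++ t₂)
  | call {Γ Φ} (f : FId) (x : PVar) (info : FunInfo) (ρf : ℕ → ℕ) :
      Φ f = some info → Γ x = some info.argTy → Function.Injective ρf →
      Compile Γ Φ (.call f (.var x)) info.retTy
        (FTuple.substT info.arg (formOf info.argTy x) (FTuple.renameF ρf info.model))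
        (Formula.substT info.arg (formOf info.argTy x) (Formula.renameF ρf info.accept))
        (info.trace.map (fun p => (ρf p.1, p.2)))

/-- The compilation judgment for programs `Γ, Φ ⊢ p : τ ⇝ (φ̇, γ, t)`. -/
inductive CompileProg :
    TyEnv → PhiTable → List FunDef → Expr → (τ : Ty) → FTuple τ → Formula → Trace → Prop
  | base {Γ Φ e τ φ γ t} :
      Compile Γ Φ e τ φ γ t → CompileProg Γ Φ [] e τ φ γ t
  | cons {Γ Φ} (fd : FunDef) {fs e τ φ γ t} (φf : FTuple fd.retTy) (γf : Formula)
      (tf : Trace) :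
      Compile (fun y => if y = fd.arg then some fd.argTy else Γ y) Φ fd.body fd.retTy
        φf γf tf →
      CompileProg Γ
        (fun g => if g = fd.name then some ⟨fd.arg, fd.argTy, fd.retTy, φf, γf, tf⟩ else Φ g)
        fs e τ φ γ t →
      CompileProg Γ Φ (fd :: fs) e τ φ γ t

/-- Compatibility of a function table `tab` and a compiled function table `Φ`. -/
def Compatible (tab : Table) (Φ : PhiTable) : Prop :=
  ∀ f info, Φ f = some info → ∀ v : Val, tyOf v = info.argTy →
    ∃ A : ADD info.trace.length,
      IsADDFor info.trace
        (FTuple.substT info.arg (constFTAt v info.argTy) info.model)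
        (Formula.substT info.arg (constFTAt v info.argTy) info.accept) A ∧
      Correspond (liftU A (annOf info.trace)) (tab f v)

/-- Lookup of a variable in a substitution list. -/
def lookupV : List (PVar × Val) → PVar → Option Val
  | [], _ => none
  | p :: ρ, x => if x = p.1 then some p.2 else lookupV ρ x

/-- The type environment induced by a substitution list. -/
def envOf (ρ : List (PVar × Val)) : TyEnv := fun x => (lookupV ρ x).map tyOf

/-- Simultaneous substitution of values (as constant formulas) into a formula. -/
def Formula.msubstV (γ : Formula) (ρ : List (PVar × Val)) : Formula :=
  ρ.foldl (fun γ' p => Formula.substT p.1 (constFTAt p.2 (tyOf p.2)) γ') γ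

/-- Simultaneous substitution of values into a tuple of formulas. -/
def FTuple.msubstV {τ : Ty} (φ : FTuple τ) (ρ : List (PVar × Val)) : FTuple τ :=
  ρ.foldl (fun φ' p => FTuple.substT p.1 (constFTAt p.2 (tyOf p.2)) φ') φ


/-- The expression
`let x = nflip() in let y = flip(2/3) in let t = observe(x ∨ y) in y`,
with `x ∨ y` desugared into nested if-statements in A-normal form. -/
def exObs : Expr :=
  .letin (.base 0) .nflip
    (.letin (.base 1) (.flip ⟨2/3, by norm_num⟩)
      (.letin (.base 2)
        (.ite (.var (.base 0)) (.atom (.val .T)) (.atom (.var (.base 1))))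
        (.letin (.base 3) (.observe (.var (.base 2)))
          (.atom (.var (.base 1))))))

/-!
In every `let` of the program the body is deterministic on the support of the bound
distribution, so the `let` denotes the image of the bound expression's semantics under
`d ↦ Σ_v d(v) · k(v)`, where `k(v)` is the body's semantics at `v`. From the inside out:
`observe (x ∨ y)` kills exactly the branch `x = y = F`, so for `x = a` the coin
`y = flip(2/3)` yields `(2/3)|T⟩ + (1/3)[a = T]|F⟩`, and mixing these with weights `p` and
`1 - p` gives `(2/3)|T⟩ + (p/3)|F⟩`.
-/

/-- `⟦e⟧^tab`. -/
def sem (tab : Table) (e : Expr) : Set SubDist := {d | Sem tab e d}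

noncomputable def bind (d : SubDist) (k : Val → SubDist) : SubDist :=
  fun w => ∑' v, d v * k v w

def bernoulli (p : ℝ) : SubDist := fun w => if w = .T then p else if w = .F then 1 - p else 0

lemma dirac_nonneg (v : Val) : 0 ≤ dirac v := fun w => by
  unfold dirac; split_ifs <;> norm_num

lemma eq_of_dirac_pos {v w : Val} (h : 0 < dirac v w) : w = v := by
  by_contra hw
  simp [dirac, hw] at h

lemma bernoulli_nonneg {p : ℝ} (h₀ : 0 ≤ p) (h₁ : p ≤ 1) : 0 ≤ bernoulli p := fun w => by
  simp only [Pi.zero_apply, bernoulli]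
  split_ifs <;> linarith

lemma eq_T_or_eq_F_of_bernoulli_pos {p : ℝ} {w : Val} (h : 0 < bernoulli p w) :
    w = .T ∨ w = .F := by
  rcases w with _ | _ | ⟨_, _⟩ <;> simp_all [bernoulli]

lemma bind_dirac (v : Val) (k : Val → SubDist) : bind (dirac v) k = k v := by
  funext w
  rw [bind, tsum_eq_single v fun u hu => by simp [dirac, hu]]
  simp [dirac]

lemma bind_zero (k : Val → SubDist) : bind 0 k = 0 := by
  funext w
  simp [bind]

lemma bind_bernoulli (p : ℝ) (k : Val → SubDist) :
    bind (bernoulli p) k = p • k .T + (1 - p) • k .F := by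
  funext w
  rw [bind, tsum_eq_sum (s := {.T, .F}) fun v hv => by simp_all [bernoulli],
    Finset.sum_pair (by decide)]
  simp [bernoulli]

section Semantics

variable {tab : Table}

lemma sem_atom_val (v : Val) : sem tab (.atom (.val v)) = {dirac v} := by
  ext d
  constructor
  · rintro ⟨⟩
    rfl
  · rintro rfl
    exact .val v

lemma sem_flip (θ : Prob) : sem tab (.flip θ) = {bernoulli θ} := by
  ext d
  constructor
  · rintro ⟨⟩
    rfl
  · rintro rfl
    exact .flip θ

lemma sem_nflip : sem tab .nflip = bernoulli '' Set.Icc 0 1 := by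
  ext d
  constructor
  · intro h
    cases h with
    | nflip p h₀ h₁ => exact ⟨p, ⟨h₀, h₁⟩, rfl⟩
  · rintro ⟨p, ⟨h₀, h₁⟩, rfl⟩
    exact .nflip p h₀ h₁

lemma sem_observe_T : sem tab (.observe (.val .T)) = {dirac .T} := by
  ext d
  constructor
  · rintro ⟨⟩
    rfl
  · rintro rfl
    exact .obsT

lemma sem_observe_F : sem tab (.observe (.val .F)) = {0} := by
  ext d
  constructor
  · rintro ⟨⟩
    rfl
  · rintro rfl
    exact .obsF

lemma sem_ite_T (e₁ e₂ : Expr) : sem tab (.ite (.val .T) e₁ e₂) = sem tab e₁ := by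
  ext d
  constructor
  · intro h
    cases h with
    | iteT h => exact h
  · exact .iteT

lemma sem_ite_F (e₁ e₂ : Expr) : sem tab (.ite (.val .F) e₁ e₂) = sem tab e₂ := by
  ext d
  constructor
  · intro h
    cases h with
    | iteF h => exact h
  · exact .iteF

/-- Nonnegativity of `d₁` is needed because the rule constrains the body only where
`d₁ v > 0`, so the terms with `d₁ v < 0` would be arbitrary. -/
lemma sem_letin {x : PVar} {e₁ e₂ : Expr} {k : Val → SubDist}
    (hk : ∀ d₁ ∈ sem tab e₁, 0 ≤ d₁ ∧ ∀ v, 0 < d₁ v → sem tab (e₂.subst x v) = {k v}) :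
    sem tab (.letin x e₁ e₂) = (bind · k) '' sem tab e₁ := by
  ext d
  constructor
  · intro h
    cases h with
    | @letin _ _ _ d₁ dv _ h₁ h₂ h₃ =>
    obtain ⟨hnonneg, hdet⟩ := hk d₁ h₁
    refine ⟨d₁, h₁, funext fun w => ?_⟩
    rw [h₃ w]
    refine tsum_congr fun v => ?_
    rcases (hnonneg v).eq_or_lt with hv | hv
    · simp [← hv]
    · have : dv v ∈ sem tab (e₂.subst x v) := h₂ v hv
      rw [hdet v hv, Set.mem_singleton_iff] at this
      rw [this]
  · rintro ⟨d₁, h₁, rfl⟩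
    refine .letin h₁ (fun v hv => ?_) fun w => rfl
    show k v ∈ sem tab _
    rw [(hk d₁ h₁).2 v hv]
    rfl

lemma sem_letin_of_sem_eq_singleton {x : PVar} {e₁ e₂ : Expr} {d₁ : SubDist}
    {k : Val → SubDist} (h₁ : sem tab e₁ = {d₁}) (hd₁ : 0 ≤ d₁)
    (hk : ∀ v, 0 < d₁ v → sem tab (e₂.subst x v) = {k v}) :
    sem tab (.letin x e₁ e₂) = {bind d₁ k} := by
  rw [sem_letin (k := k) (by rw [h₁]; rintro _ rfl; exact ⟨hd₁, hk⟩), h₁, Set.image_singleton]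

lemma sem_letin_flip {x : PVar} {e : Expr} {k : Val → SubDist} (θ : Prob)
    (hT : sem tab (e.subst x .T) = {k .T}) (hF : sem tab (e.subst x .F) = {k .F}) :
    sem tab (.letin x (.flip θ) e) = {(θ.1 : ℝ) • k .T + (1 - (θ.1 : ℝ)) • k .F} := by
  have hθ : 0 ≤ bernoulli θ.1 :=
    bernoulli_nonneg (by exact_mod_cast θ.2.1) (by exact_mod_cast θ.2.2)
  rw [sem_letin_of_sem_eq_singleton (sem_flip θ) hθ (k := k), bind_bernoulli]
  intro v hv
  rcases eq_T_or_eq_F_of_bernoulli_pos hv with rfl | rfl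
  exacts [hT, hF]

lemma sem_letin_nflip {x : PVar} {e : Expr} {k : Val → SubDist}
    (hT : sem tab (e.subst x .T) = {k .T}) (hF : sem tab (e.subst x .F) = {k .F}) :
    sem tab (.letin x .nflip e) = (fun p : ℝ => p • k .T + (1 - p) • k .F) '' Set.Icc 0 1 := by
  rw [sem_letin (k := k), sem_nflip, Set.image_image]
  · simp only [bind_bernoulli]
  rw [sem_nflip]
  rintro _ ⟨p, ⟨h₀, h₁⟩, rfl⟩
  refine ⟨bernoulli_nonneg h₀ h₁, fun v hv => ?_⟩
  rcases eq_T_or_eq_F_of_bernoulli_pos hv with rfl | rfl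
  exacts [hT, hF]

lemma sem_letin_observe_val (x : PVar) {c : Val} (hc : c = .T ∨ c = .F) (b : Val) :
    sem tab (.letin x (.observe (.val c)) (.atom (.val b))) =
      {if c = .T then dirac b else 0} := by
  rcases hc with rfl | rfl
  · rw [sem_letin_of_sem_eq_singleton sem_observe_T (dirac_nonneg _) (k := fun _ => dirac b)
      fun _ _ => sem_atom_val b, bind_dirac, if_pos rfl]
  · rw [sem_letin_of_sem_eq_singleton sem_observe_F le_rfl (k := 0)
      fun _ hv => absurd hv (lt_irrefl 0), bind_zero, if_neg (by decide)]

lemma sem_letin_or_observe {z t : PVar} (htz : t ≠ z) {a b : Val} (ha : a = .T ∨ a = .F)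
    (hb : b = .T ∨ b = .F) :
    sem tab (.letin z (.ite (.val a) (.atom (.val .T)) (.atom (.val b)))
        (.letin t (.observe (.var z)) (.atom (.val b)))) =
      {if a = .T ∨ b = .T then dirac b else 0} := by
  have hor : sem tab (.ite (.val a) (.atom (.val .T)) (.atom (.val b))) =
      {dirac (if a = .T then .T else b)} := by
    rcases ha with rfl | rfl
    · rw [sem_ite_T, sem_atom_val, if_pos rfl]
    · rw [sem_ite_F, sem_atom_val, if_neg (by decide)]
  rw [sem_letin_of_sem_eq_singleton hor (dirac_nonneg _)
    (k := fun c => if c = .T then dirac b else 0), bind_dirac]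
  · rcases ha with rfl | rfl <;> simp
  · intro c hc
    rw [eq_of_dirac_pos hc]
    simp only [Expr.subst, AExp.subst, htz, if_true, if_false]
    exact sem_letin_observe_val t (by rcases ha with rfl | rfl <;> simp [hb]) b

lemma sem_letin_flip_or_observe {y z t : PVar} (hzy : z ≠ y) (hty : t ≠ y) (htz : t ≠ z)
    (θ : Prob) {a : Val} (ha : a = .T ∨ a = .F) :
    sem tab (.letin y (.flip θ)
        (.letin z (.ite (.val a) (.atom (.val .T)) (.atom (.var y)))
          (.letin t (.observe (.var z)) (.atom (.var y))))) =
      {(θ.1 : ℝ) • dirac .T + (1 - (θ.1 : ℝ)) • if a = .T then dirac .F else 0} := by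
  rw [sem_letin_flip θ (k := fun b => if a = .T ∨ b = .T then dirac b else 0)]
  · simp
  all_goals simp only [Expr.subst, AExp.subst, hzy, hty, if_true, if_false]
  · simpa using sem_letin_or_observe htz ha (b := .T) (.inl rfl)
  · simpa using sem_letin_or_observe htz ha (b := .F) (.inr rfl)

end Semantics

theorem exObs_semantics :
    {d | Sem emptyTable exObs d}
      = {d | ∃ p : ℝ, 0 ≤ p ∧ p ≤ 1 ∧
          d = fun w => if w = Val.T then 2/3
                       else if w = Val.F then 1/3 * p else 0} := by
  change sem emptyTable exObs = _
  rw [exObs, sem_letin_nflip (k := fun a =>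
    ((2/3 : ℚ) : ℝ) • dirac .T + (1 - ((2/3 : ℚ) : ℝ)) • if a = .T then dirac .F else 0)]
  · ext d
    simp only [Set.mem_image, Set.mem_Icc, Set.mem_ofPred_eq, and_assoc, eq_comm (b := d)]
    refine exists_congr fun p => and_congr_right' <| and_congr_right' <| Eq.congr_right ?_
    funext w
    rcases w with _ | _ | _ <;> simp [dirac] <;> ring
  all_goals exact sem_letin_flip_or_observe (by decide) (by decide) (by decide) _ (by simp)

end NoDice
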